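/- arXiv:1008.1947 — 3 statements merged into one kernel-verified Lean document; each statement's English description precedes it below -/
import Mathlib

section
/- (Hilbert series of the weighted G₂ hypersurface flag variety, highest weight λ₁ = ω₁.) In the fraction field K = Frac(ℚ[x,y,q]) the following identity holds: ∑ over the 12 triples (ε, (p,q), (r,s)) listed below of ε · x^p y^q / (1 − q·x^r y^s) equals (1 − q²)·D / ((1 − q)·∏_{(c,d)} (1 − q·x^c y^d)), where D = x⁵y³ − x⁴y³ − x⁵y² + xy² + x⁴y − x^{−1}y − xy^{−1} + x^{−4}y^{−1} + x^{−1}y^{−2} − x^{−5}y^{−2} − x^{−4}y^{−3} + x^{−5}y^{−3} and the product is over the six short roots (c,d) ∈ {(2,1),(1,1),(1,0),(−1,0),(−1,−1),(−2,−1)}. The 12 triples (ε, wρ, wω₁) are: (+,(5,3),(2,1)), (−,(4,3),(1,1)), (−,(5,2),(2,1)), (+,(1,2),(1,1)), (+,(4,1),(1,0)), (−,(−1,1),(−1,0)), (−,(1,−1),(1,0)), (+,(−4,−1),(−1,0)), (+,(−1,−2),(−1,−1)), (−,(−5,−2),(−2,−1)), (−,(−4,−3),(−1,−1)), (+,(−5,−3),(−2,−1)).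 Specializing x = t^a, y = t^b, q = t^u, this says that the Hilbert series of the weighted G₂ flag variety for the 7-dimensional representation V_{ω₁} is P_{wΣ}(t) = (1−t^{2u})/((1−t^u)·∏_{α∈∇_s}(1 − t^{⟨α,μ⟩+u})). -/
open MvPolynomial

/-- The fraction field `K = Frac(ℚ[x,y,q])`. -/
abbrev G2Field : Type := FractionRing (MvPolynomial (Fin 3) ℚ)

/-- The element `x` of `Frac(ℚ[x,y,q])`. -/
noncomputable def G2x : G2Field := algebraMap (MvPolynomial (Fin 3) ℚ) G2Field (X 0)
/-- The element `y` of `Frac(ℚ[x,y,q])`. -/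
noncomputable def G2y : G2Field := algebraMap (MvPolynomial (Fin 3) ℚ) G2Field (X 1)
/-- The element `q` of `Frac(ℚ[x,y,q])`. -/
noncomputable def G2q : G2Field := algebraMap (MvPolynomial (Fin 3) ℚ) G2Field (X 2)

/-- The monomial `x^p y^q` (with integer exponents) in `Frac(ℚ[x,y,q])`. -/
noncomputable def G2m (p q : ℤ) : G2Field := G2x ^ p * G2y ^ q

/-- The Weyl numerator `D = ∑_{w∈W} (−1)^w x^{wρ}` for `G₂`. -/
noncomputable def G2D : G2Field :=
  G2m 5 3 - G2m 4 3 - G2m 5 2 + G2m 1 2 + G2m 4 1 - G2m (-1) 1 - G2m 1 (-1)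
    + G2m (-4) (-1) + G2m (-1) (-2) - G2m (-5) (-2) - G2m (-4) (-3) + G2m (-5) (-3)

/-! The Hilbert series is `∑_k q^k χ_{kω₁} = (1 - q²) / ∏_{μ ∈ wt V_{ω₁}} (1 - q x^μ)`,
since `Sym^k V_{ω₁} = V_{kω₁} ⊕ Sym^{k-2} V_{ω₁}` (the invariant quadric); multiplying by the
Weyl denominator and expanding `1 / (1 - q x^{wω₁})` geometrically gives the alternating sum
over `W`. As an identity of rational functions it is checked by clearing denominators. -/

def laurentMonomial {K : Type*} [Field K] (x y : K) (e : ℤ × ℤ) : K := x ^ e.1 * y ^ e.2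

namespace G2

/-- The triples `((-1)^w, wρ, wω₁)` for the twelve elements `w` of the Weyl group. -/
def weylData : List (ℤ × (ℤ × ℤ) × (ℤ × ℤ)) :=
  [(1, (5, 3), (2, 1)), (-1, (4, 3), (1, 1)), (-1, (5, 2), (2, 1)), (1, (1, 2), (1, 1)),
    (1, (4, 1), (1, 0)), (-1, (-1, 1), (-1, 0)), (-1, (1, -1), (1, 0)), (1, (-4, -1), (-1, 0)),
    (1, (-1, -2), (-1, -1)), (-1, (-5, -2), (-2, -1)), (-1, (-4, -3), (-1, -1)),
    (1, (-5, -3), (-2, -1))]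

def shortRoots : List (ℤ × ℤ) := [(2, 1), (1, 1), (1, 0), (-1, 0), (-1, -1), (-2, -1)]

theorem sum_weylData_div_eq {K : Type*} [Field K] (x y q : K) (hx : x ≠ 0) (hy : y ≠ 0)
    (hq : 1 - q ≠ 0) (hα : ∀ α ∈ shortRoots, 1 - q * laurentMonomial x y α ≠ 0) :
    (weylData.map fun w =>
        w.1 * laurentMonomial x y w.2.1 / (1 - q * laurentMonomial x y w.2.2)).sum
      = (1 - q ^ 2) * (weylData.map fun w => w.1 * laurentMonomial x y w.2.1).sum
        / ((1 - q) * (shortRoots.map fun α => 1 - q * laurentMonomial x y α).prod) := by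
  simp only [shortRoots, List.forall_mem_cons, List.not_mem_nil, IsEmpty.forall_iff,
    forall_const, and_true] at hα
  simp only [weylData, shortRoots, List.map_cons, List.map_nil, List.sum_cons, List.sum_nil,
    List.prod_cons, List.prod_nil]
  simp only [laurentMonomial, zpow_neg, zpow_ofNat, Int.cast_one, Int.cast_neg, pow_one,
    pow_zero, one_mul, mul_one, neg_one_mul, add_zero, ← mul_inv] at hα ⊢
  obtain ⟨h1, h2, h3, h4, h5, h6⟩ := hα
  have hxy : x * y ≠ 0 := mul_ne_zero hx hy
  have hx2y : x ^ 2 * y ≠ 0 := mul_ne_zero (pow_ne_zero 2 hx) hy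
  simp only [← div_eq_mul_inv] at h4 h5 h6 ⊢
  rw [one_sub_div hx] at h4 ⊢
  rw [one_sub_div hxy] at h5 ⊢
  rw [one_sub_div hx2y] at h6 ⊢
  replace h4 := (div_ne_zero_iff.mp h4).1
  replace h5 := (div_ne_zero_iff.mp h5).1
  replace h6 := (div_ne_zero_iff.mp h6).1
  -- Abstracted, the denominators cannot be normalized by `field_simp` out of reach of `h1`-`hq`.
  generalize e1 : 1 - q * (x ^ 2 * y) = d1 at *
  generalize e2 : 1 - q * (x * y) = d2 at *
  generalize e3 : 1 - q * x = d3 at *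
  generalize e4 : x - q = d4 at *
  generalize e5 : x * y - q = d5 at *
  generalize e6 : x ^ 2 * y - q = d6 at *
  generalize e7 : 1 - q = d7 at *
  field_simp
  subst e1 e2 e3 e4 e5 e6 e7
  ring

end G2

theorem laurentMonomial_G2x_G2y (e : ℤ × ℤ) : laurentMonomial G2x G2y e = G2m e.1 e.2 := rfl

theorem G2x_ne_zero : G2x ≠ 0 :=
  (IsFractionRing.to_map_eq_zero_iff).not.mpr (X_ne_zero 0)

theorem G2y_ne_zero : G2y ≠ 0 :=
  (IsFractionRing.to_map_eq_zero_iff).not.mpr (X_ne_zero 1)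

theorem G2m_natCast (m n : ℕ) :
    G2m m n = algebraMap (MvPolynomial (Fin 3) ℚ) G2Field (X 0 ^ m * X 1 ^ n) := by
  simp [G2m, G2x, G2y]

theorem G2m_add (a b c d : ℤ) : G2m (a + c) (b + d) = G2m a b * G2m c d := by
  simp only [G2m, zpow_add₀ G2x_ne_zero, zpow_add₀ G2y_ne_zero]
  ring

theorem G2m_mul_G2m_toNat_neg (a b : ℤ) :
    G2m a b * G2m (-a).toNat (-b).toNat = G2m a.toNat b.toNat := by
  rw [← G2m_add]
  congr 1 <;> omega

theorem one_sub_G2q_mul_G2m_ne_zero (a b : ℤ) : 1 - G2q * G2m a b ≠ 0 := by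
  intro h
  have hpoly : X 0 ^ (-a).toNat * X 1 ^ (-b).toNat - X 2 * (X 0 ^ a.toNat * X 1 ^ b.toNat)
      = (0 : MvPolynomial (Fin 3) ℚ) := by
    rw [← IsFractionRing.to_map_eq_zero_iff (K := G2Field), map_sub,
      map_mul (algebraMap _ G2Field) (X 2), ← G2m_natCast, ← G2m_natCast,
      ← G2m_mul_G2m_toNat_neg a b]
    simp only [G2q] at h
    linear_combination G2m (-a).toNat (-b).toNat * h
  simpa using congrArg (eval fun i => if i = 2 then 0 else 1) hpoly

/-- **Hilbert series of the weighted `G₂` hypersurface flag variety** (highest weight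
`λ₁ = ω₁`).  In `K = Frac(ℚ[x,y,q])`:
`∑_{w∈W} (−1)^w x^{wρ} / (1 − q x^{wω₁})
  = (1 − q²) D / ((1 − q) ∏_{α short} (1 − q x^α))`.
Specializing `x = tᵃ, y = tᵇ, q = tᵘ` this is
`P_{wΣ}(t) = (1 − t^{2u}) / ((1 − t^u) ∏_{α∈∇_s} (1 − t^{⟨α,μ⟩+u}))`. -/
theorem hilbert_series_weighted_G2_hypersurface :
    G2m 5 3 / (1 - G2q * G2m 2 1)
      - G2m 4 3 / (1 - G2q * G2m 1 1)
      - G2m 5 2 / (1 - G2q * G2m 2 1)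
      + G2m 1 2 / (1 - G2q * G2m 1 1)
      + G2m 4 1 / (1 - G2q * G2m 1 0)
      - G2m (-1) 1 / (1 - G2q * G2m (-1) 0)
      - G2m 1 (-1) / (1 - G2q * G2m 1 0)
      + G2m (-4) (-1) / (1 - G2q * G2m (-1) 0)
      + G2m (-1) (-2) / (1 - G2q * G2m (-1) (-1))
      - G2m (-5) (-2) / (1 - G2q * G2m (-2) (-1))
      - G2m (-4) (-3) / (1 - G2q * G2m (-1) (-1))
      + G2m (-5) (-3) / (1 - G2q * G2m (-2) (-1))
    = (1 - G2q ^ 2) * G2D /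
        ((1 - G2q) *
          ((1 - G2q * G2m 2 1) * (1 - G2q * G2m 1 1) * (1 - G2q * G2m 1 0)
            * (1 - G2q * G2m (-1) 0) * (1 - G2q * G2m (-1) (-1))
            * (1 - G2q * G2m (-2) (-1)))) := by
  have h := G2.sum_weylData_div_eq G2x G2y G2q G2x_ne_zero G2y_ne_zero
    (by simpa [G2m] using one_sub_G2q_mul_G2m_ne_zero 0 0)
    (fun α _ => one_sub_G2q_mul_G2m_ne_zero α.1 α.2)
  simp only [G2.weylData, G2.shortRoots, List.map_cons, List.map_nil, List.sum_cons,
    List.sum_nil, List.prod_cons, List.prod_nil, laurentMonomial_G2x_G2y, Int.cast_one,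
    Int.cast_neg] at h
  rw [G2D]
  linear_combination h
end

section
/- Let Q₁,…,Q₂₈ ∈ ℂ[x₁,…,x₁₄] be the 28 quadrics listed in the context. If a point (x₁,…,x₁₄) ∈ ℂ¹⁴ satisfies x_i = 0 for all i ∉ {3, 10} and Q_j(x) = 0 for all j = 1,…,28, then x₃ = 0 and x₁₀ = 0. (Thus the equations have only the trivial solution on the 1/3 singular stratum, so the Calabi–Yau threefold quasi-linear section X of wΣ ⊂ ℙ¹³[1²,2,3²,4⁴,5²,6,7²] contains no 1/3 singularities, x₃ and x₁₀ being the coordinates of weight 3.) -/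
/-- The quadric `Q1`, evaluated at a point of `ℂ¹⁴`. -/
noncomputable def cG2Q1 (x : Fin 14 → ℂ) : ℂ :=
  (1 : ℂ) * x 13 * x 13 + (1 : ℂ) * x 12 * x 13 + (1/3 : ℂ) * x 12 * x 12 + (1 : ℂ) * x 5 * x 11 + (1/3 : ℂ) * x 3 * x 9 + (1 : ℂ) * x 4 * x 10 + (1/3 : ℂ) * x 2 * x 8 + (1 : ℂ) * x 1 * x 7 + (1/3 : ℂ) * x 0 * x 6

/-- The quadric `Q2`, evaluated at a point of `ℂ¹⁴`. -/
noncomputable def cG2Q2 (x : Fin 14 → ℂ) : ℂ :=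
  (1 : ℂ) * x 13 * x 13 + (2 : ℂ) * x 12 * x 13 + (8/9 : ℂ) * x 12 * x 12 + (1 : ℂ) * x 5 * x 11 + (3 : ℂ) * x 4 * x 10 + (-4/9 : ℂ) * x 3 * x 9 + (-7/9 : ℂ) * x 2 * x 8 + (-5/9 : ℂ) * x 0 * x 6

/-- The quadric `Q3`, evaluated at a point of `ℂ¹⁴`. -/
noncomputable def cG2Q3 (x : Fin 14 → ℂ) : ℂ :=
  (2 : ℂ) * x 12 * x 13 + (5/3 : ℂ) * x 12 * x 12 + (9 : ℂ) * x 4 * x 10 + (-5/3 : ℂ) * x 3 * x 9 + (-7/3 : ℂ) * x 2 * x 8 + (3 : ℂ) * x 1 * x 7 + (-4/3 : ℂ) * x 0 * x 6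

/-- The quadric `Q4`, evaluated at a point of `ℂ¹⁴`. -/
noncomputable def cG2Q4 (x : Fin 14 → ℂ) : ℂ :=
  (1 : ℂ) * x 12 * x 12 + (9 : ℂ) * x 4 * x 10 + (-3 : ℂ) * x 3 * x 9 + (-3 : ℂ) * x 2 * x 8 + (9 : ℂ) * x 1 * x 7 + (-2 : ℂ) * x 0 * x 6

/-- The quadric `Q5`, evaluated at a point of `ℂ¹⁴`. -/
noncomputable def cG2Q5 (x : Fin 14 → ℂ) : ℂ :=
  (1 : ℂ) * x 10 * x 13 + (1/3 : ℂ) * x 10 * x 12 + (1/9 : ℂ) * x 6 * x 9 + (1 : ℂ) * x 1 * x 11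

/-- The quadric `Q6`, evaluated at a point of `ℂ¹⁴`. -/
noncomputable def cG2Q6 (x : Fin 14 → ℂ) : ℂ :=
  (1 : ℂ) * x 4 * x 9 + (-2/3 : ℂ) * x 3 * x 8 + (-3 : ℂ) * x 2 * x 7 + (2 : ℂ) * x 0 * x 13 + (1/3 : ℂ) * x 0 * x 12

/-- The quadric `Q7`, evaluated at a point of `ℂ¹⁴`. -/
noncomputable def cG2Q7 (x : Fin 14 → ℂ) : ℂ :=
  (1 : ℂ) * x 9 * x 13 + (4/9 : ℂ) * x 9 * x 12 + (2/9 : ℂ) * x 6 * x 8 + (-1 : ℂ) * x 2 * x 11 + (1/3 : ℂ) * x 0 * x 10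

/-- The quadric `Q8`, evaluated at a point of `ℂ¹⁴`. -/
noncomputable def cG2Q8 (x : Fin 14 → ℂ) : ℂ :=
  (1 : ℂ) * x 8 * x 13 + (1 : ℂ) * x 8 * x 12 + (-1 : ℂ) * x 6 * x 7 + (1 : ℂ) * x 3 * x 11 + (2/3 : ℂ) * x 0 * x 9

/-- The quadric `Q9`, evaluated at a point of `ℂ¹⁴`. -/
noncomputable def cG2Q9 (x : Fin 14 → ℂ) : ℂ :=
  (1 : ℂ) * x 7 * x 13 + (2/3 : ℂ) * x 7 * x 12 + (-1 : ℂ) * x 4 * x 11 + (1/9 : ℂ) * x 0 * x 8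

/-- The quadric `Q10`, evaluated at a point of `ℂ¹⁴`. -/
noncomputable def cG2Q10 (x : Fin 14 → ℂ) : ℂ :=
  (2 : ℂ) * x 6 * x 13 + (5/3 : ℂ) * x 6 * x 12 + (-3 : ℂ) * x 3 * x 10 + (-2/3 : ℂ) * x 2 * x 9 + (1 : ℂ) * x 1 * x 8

/-- The quadric `Q11`, evaluated at a point of `ℂ¹⁴`. -/
noncomputable def cG2Q11 (x : Fin 14 → ℂ) : ℂ :=
  (1 : ℂ) * x 5 * x 7 + (1 : ℂ) * x 4 * x 13 + (1/3 : ℂ) * x 4 * x 12 + (1/9 : ℂ) * x 0 * x 3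

/-- The quadric `Q12`, evaluated at a point of `ℂ¹⁴`. -/
noncomputable def cG2Q12 (x : Fin 14 → ℂ) : ℂ :=
  (3 : ℂ) * x 4 * x 6 + (-1 : ℂ) * x 5 * x 8 + (1 : ℂ) * x 3 * x 13 + (4/3 : ℂ) * x 3 * x 12 + (-2/3 : ℂ) * x 0 * x 2

/-- The quadric `Q13`, evaluated at a point of `ℂ¹⁴`. -/
noncomputable def cG2Q13 (x : Fin 14 → ℂ) : ℂ :=
  (1 : ℂ) * x 5 * x 9 + (-2/3 : ℂ) * x 3 * x 6 + (1 : ℂ) * x 2 * x 13 + (-1/3 : ℂ) * x 2 * x 12 + (3 : ℂ) * x 0 * x 1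

/-- The quadric `Q14`, evaluated at a point of `ℂ¹⁴`. -/
noncomputable def cG2Q14 (x : Fin 14 → ℂ) : ℂ :=
  (-1 : ℂ) * x 5 * x 10 + (1/9 : ℂ) * x 2 * x 6 + (1 : ℂ) * x 1 * x 13 + (2/3 : ℂ) * x 1 * x 12

/-- The quadric `Q15`, evaluated at a point of `ℂ¹⁴`. -/
noncomputable def cG2Q15 (x : Fin 14 → ℂ) : ℂ :=
  (1 : ℂ) * x 11 * x 12 + (-1/3 : ℂ) * x 8 * x 9 + (3 : ℂ) * x 7 * x 10

/-- The quadric `Q16`, evaluated at a point of `ℂ¹⁴`. -/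
noncomputable def cG2Q16 (x : Fin 14 → ℂ) : ℂ :=
  (1 : ℂ) * x 9 * x 12 + (-1 : ℂ) * x 6 * x 8 + (3 : ℂ) * x 0 * x 10

/-- The quadric `Q17`, evaluated at a point of `ℂ¹⁴`. -/
noncomputable def cG2Q17 (x : Fin 14 → ℂ) : ℂ :=
  (1 : ℂ) * x 8 * x 12 + (-3 : ℂ) * x 6 * x 7 + (1 : ℂ) * x 0 * x 9

/-- The quadric `Q18`, evaluated at a point of `ℂ¹⁴`. -/
noncomputable def cG2Q18 (x : Fin 14 → ℂ) : ℂ :=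
  (1 : ℂ) * x 6 * x 12 + (-3 : ℂ) * x 3 * x 10 + (3 : ℂ) * x 1 * x 8

/-- The quadric `Q19`, evaluated at a point of `ℂ¹⁴`. -/
noncomputable def cG2Q19 (x : Fin 14 → ℂ) : ℂ :=
  (1 : ℂ) * x 5 * x 12 + (-1/3 : ℂ) * x 2 * x 3 + (3 : ℂ) * x 1 * x 4

/-- The quadric `Q20`, evaluated at a point of `ℂ¹⁴`. -/
noncomputable def cG2Q20 (x : Fin 14 → ℂ) : ℂ :=
  (3 : ℂ) * x 4 * x 6 + (1 : ℂ) * x 3 * x 12 + (-1 : ℂ) * x 0 * x 2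

/-- The quadric `Q21`, evaluated at a point of `ℂ¹⁴`. -/
noncomputable def cG2Q21 (x : Fin 14 → ℂ) : ℂ :=
  (1 : ℂ) * x 3 * x 6 + (1 : ℂ) * x 2 * x 12 + (-3 : ℂ) * x 0 * x 1

/-- The quadric `Q22`, evaluated at a point of `ℂ¹⁴`. -/
noncomputable def cG2Q22 (x : Fin 14 → ℂ) : ℂ :=
  (1 : ℂ) * x 0 * x 12 + (-3 : ℂ) * x 4 * x 9 + (3 : ℂ) * x 2 * x 7

/-- The quadric `Q23`, evaluated at a point of `ℂ¹⁴`. -/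
noncomputable def cG2Q23 (x : Fin 14 → ℂ) : ℂ :=
  (1 : ℂ) * x 8 * x 10 + (-1/3 : ℂ) * x 9 * x 9 + (1 : ℂ) * x 6 * x 11

/-- The quadric `Q24`, evaluated at a point of `ℂ¹⁴`. -/
noncomputable def cG2Q24 (x : Fin 14 → ℂ) : ℂ :=
  (1/3 : ℂ) * x 8 * x 8 + (-1 : ℂ) * x 7 * x 9 + (1 : ℂ) * x 0 * x 11

/-- The quadric `Q25`, evaluated at a point of `ℂ¹⁴`. -/
noncomputable def cG2Q25 (x : Fin 14 → ℂ) : ℂ :=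
  (1/3 : ℂ) * x 6 * x 6 + (1 : ℂ) * x 2 * x 10 + (1 : ℂ) * x 1 * x 9

/-- The quadric `Q26`, evaluated at a point of `ℂ¹⁴`. -/
noncomputable def cG2Q26 (x : Fin 14 → ℂ) : ℂ :=
  (1 : ℂ) * x 4 * x 8 + (1 : ℂ) * x 3 * x 7 + (1/3 : ℂ) * x 0 * x 0

/-- The quadric `Q27`, evaluated at a point of `ℂ¹⁴`. -/
noncomputable def cG2Q27 (x : Fin 14 → ℂ) : ℂ :=
  (1 : ℂ) * x 5 * x 6 + (1/3 : ℂ) * x 2 * x 2 + (-1 : ℂ) * x 1 * x 3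

/-- The quadric `Q28`, evaluated at a point of `ℂ¹⁴`. -/
noncomputable def cG2Q28 (x : Fin 14 → ℂ) : ℂ :=
  (1 : ℂ) * x 0 * x 5 + (-1/3 : ℂ) * x 3 * x 3 + (1 : ℂ) * x 2 * x 4

/-- The 28 quadrics `Q₁, …, Q₂₈` defining the codimension-eight `G₂` flag variety
`Σ ⊂ ℙ¹³`, as functions on `ℂ¹⁴` (a point is `x : Fin 14 → ℂ`, with
`xᵢ = x (i−1)`). -/
noncomputable def cG2Quadrics : Fin 28 → (Fin 14 → ℂ) → ℂ :=
  ![cG2Q1, cG2Q2, cG2Q3, cG2Q4, cG2Q5, cG2Q6, cG2Q7, cG2Q8, cG2Q9, cG2Q10, cG2Q11, cG2Q12, cG2Q13, cG2Q14, cG2Q15, cG2Q16, cG2Q17, cG2Q18, cG2Q19, cG2Q20, cG2Q21, cG2Q22, cG2Q23, cG2Q24, cG2Q25, cG2Q26, cG2Q27, cG2Q28]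

/-! On the stratum where only `x₃` and `x₁₀` may be nonzero, `Q₂₇` restricts to `x₃²/3` and
`Q₂₃` to `-x₁₀²/3`, so these two quadrics alone force `x₃ = x₁₀ = 0`. -/

section OneThirdStratum

variable {x : Fin 14 → ℂ}

theorem cG2Q27_eq_of_support (hzero : ∀ i : Fin 14, i ≠ 2 → i ≠ 9 → x i = 0) :
    cG2Q27 x = x 2 ^ 2 / 3 := by
  simp only [cG2Q27, hzero 1 (by decide) (by decide), hzero 5 (by decide) (by decide),
    hzero 6 (by decide) (by decide)]
  ring

theorem cG2Q23_eq_of_support (hzero : ∀ i : Fin 14, i ≠ 2 → i ≠ 9 → x i = 0) :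
    cG2Q23 x = -(x 9 ^ 2 / 3) := by
  simp only [cG2Q23, hzero 6 (by decide) (by decide), hzero 8 (by decide) (by decide),
    hzero 11 (by decide) (by decide)]
  ring

end OneThirdStratum

/-- **No `1/3` singularities.**  If a point of `ℂ¹⁴` has `xᵢ = 0` for all
`i ∉ {3, 10}` and satisfies all 28 quadrics, then also `x₃ = 0` and `x₁₀ = 0`.
(Thus the equations have only the trivial solution on the `1/3` singular stratum,
so the Calabi–Yau threefold section `X ⊂ wΣ ⊂ ℙ¹³[1²,2,3²,4⁴,5²,6,7²]` contains no
`1/3` singularities, `x₃` and `x₁₀` being the coordinates of weight 3.) -/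
theorem G2_no_one_third_singularities (x : Fin 14 → ℂ)
    (hzero : ∀ i : Fin 14, i ≠ 2 → i ≠ 9 → x i = 0)
    (hquad : ∀ j : Fin 28, cG2Quadrics j x = 0) :
    x 2 = 0 ∧ x 9 = 0 := by
  have hQ27 : x 2 ^ 2 / 3 = 0 := cG2Q27_eq_of_support hzero ▸ hquad 26
  have hQ23 : -(x 9 ^ 2 / 3) = 0 := cG2Q23_eq_of_support hzero ▸ hquad 22
  constructor
  · simpa using hQ27
  · simpa using hQ23
end

section
/- Let Q₁,…,Q₂₈ ∈ ℂ[x₁,…,x₁₄] be the 28 quadrics listed in the context. For a point (x₁,…,x₁₄) ∈ ℂ¹⁴ with x_i = 0 for all i ∉ {6, 12, 13, 14}, all 28 quadrics vanish at the point if and only if x₁₃ = 0 and x₁₄² + x₆x₁₂ = 0. (Hence the intersection of the weighted G₂ flag variety with the 1/4 singular stratum of ℙ¹³[1²,2,3²,4⁴,5²,6,7²] — the coordinates x₆, x₁₂, x₁₃, x₁₄ being exactly those of weight 4 — is the rational curve C = {x₆x₁₂ + x₁₄² = 0} in ℙ²[x₆, x₁₂, x₁₄], which on the Calabi–Yau threefold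 section X is a curve of singularities of type 1/4(1,3).) -/
/-! On the weight-4 plane `Q₄` restricts to `x₁₃²`, forcing `x₁₃ = 0`; after that every
quadric restricts either to `0` or to `x₁₄² + x₆x₁₂`. -/

/-- The point of `ℂ¹⁴` with `(x₆, x₁₂, x₁₃, x₁₄) = (a, b, c, d)` and all other coordinates zero. -/
def weightFourPoint (a b c d : ℂ) : Fin 14 → ℂ :=
  ![0, 0, 0, 0, 0, a, 0, 0, 0, 0, 0, b, c, d]

theorem eq_weightFourPoint_of_eq_zero {x : Fin 14 → ℂ}
    (hzero : ∀ i : Fin 14, i ≠ 5 → i ≠ 11 → i ≠ 12 → i ≠ 13 → x i = 0) :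
    x = weightFourPoint (x 5) (x 11) (x 12) (x 13) := by
  funext i
  fin_cases i <;> first
    | rfl
    | exact hzero _ (by decide) (by decide) (by decide) (by decide)

theorem cG2Q4_weightFourPoint (a b c d : ℂ) : cG2Q4 (weightFourPoint a b c d) = c ^ 2 := by
  simp only [cG2Q4, weightFourPoint, Matrix.cons_val, one_mul, mul_zero, add_zero,
    Matrix.cons_val_one, Matrix.cons_val_zero]
  ring

theorem cG2Q1_weightFourPoint (a b d : ℂ) :
    cG2Q1 (weightFourPoint a b 0 d) = d ^ 2 + a * b := by
  simp only [cG2Q1, weightFourPoint, Matrix.cons_val, one_mul, mul_zero, zero_mul, add_zero,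
    Matrix.cons_val_one, Matrix.cons_val_zero]
  ring

theorem cG2Quadrics_weightFourPoint_eq_zero {a b d : ℂ} (h : d ^ 2 + a * b = 0) (j : Fin 28) :
    cG2Quadrics j (weightFourPoint a b 0 d) = 0 := by
  fin_cases j <;>
    simp [cG2Quadrics, cG2Q1, cG2Q2, cG2Q3, cG2Q4, cG2Q5, cG2Q6, cG2Q7, cG2Q8, cG2Q9, cG2Q10,
      cG2Q11, cG2Q12, cG2Q13, cG2Q14, cG2Q15, cG2Q16, cG2Q17, cG2Q18, cG2Q19, cG2Q20, cG2Q21,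
      cG2Q22, cG2Q23, cG2Q24, cG2Q25, cG2Q26, cG2Q27, cG2Q28, weightFourPoint] <;>
    linear_combination h

theorem forall_cG2Quadrics_weightFourPoint_eq_zero_iff (a b c d : ℂ) :
    (∀ j : Fin 28, cG2Quadrics j (weightFourPoint a b c d) = 0) ↔ c = 0 ∧ d ^ 2 + a * b = 0 := by
  constructor
  · intro h
    have hc : c = 0 := pow_eq_zero_iff two_ne_zero |>.mp <| cG2Q4_weightFourPoint a b c d ▸ h 3
    subst hc
    exact ⟨rfl, cG2Q1_weightFourPoint a b d ▸ h 0⟩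
  · rintro ⟨rfl, h⟩
    exact cG2Quadrics_weightFourPoint_eq_zero h

/-- **The `1/4` singular stratum meets `wΣ` in the conic `{x₆x₁₂ + x₁₄² = 0}`.**
For a point of `ℂ¹⁴` with `xᵢ = 0` for all `i ∉ {6, 12, 13, 14}`, all 28 quadrics
vanish at the point if and only if `x₁₃ = 0` and `x₁₄² + x₆x₁₂ = 0`.  (Hence the
intersection of the weighted `G₂` flag variety with the `1/4` singular stratum of
`ℙ¹³[1²,2,3²,4⁴,5²,6,7²]` — the coordinates `x₆,x₁₂,x₁₃,x₁₄` being exactly those of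
weight 4 — is the rational curve `C = {x₆x₁₂ + x₁₄² = 0} ⊂ ℙ²[x₆,x₁₂,x₁₄]`, which on
the Calabi–Yau threefold section `X` is a curve of singularities of type
`1/4(1,3)`.) -/
theorem G2_one_fourth_stratum (x : Fin 14 → ℂ)
    (hzero : ∀ i : Fin 14, i ≠ 5 → i ≠ 11 → i ≠ 12 → i ≠ 13 → x i = 0) :
    (∀ j : Fin 28, cG2Quadrics j x = 0) ↔
      (x 12 = 0 ∧ x 13 ^ 2 + x 5 * x 11 = 0) := by
  rw [eq_weightFourPoint_of_eq_zero hzero]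
  exact forall_cG2Quadrics_weightFourPoint_eq_zero_iff _ _ _ _
end
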